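/- arXiv:math/0702362 — 2 statements merged into one kernel-verified Lean document; each statement's English description precedes it below -/
import Mathlib

section
/- For n ≥ 2 and σ > 1, the weight w_σ(x) = |x|(1+|log|x||)^σ is a Muckenhoupt A₂ weight on ℝⁿ: there exists A < ∞ such that for every ball B, (|B|^{-1} ∫_B w_σ dx)(|B|^{-1} ∫_B w_σ^{-1} dx) ≤ A. -/
open MeasureTheory

noncomputable section

/-- The A₂ quantity of a weight `w` over the ball `B(x₀,R)`:
the product of the averages of `w` and `w⁻¹` over the ball. -/
def A2quantity {n : ℕ} (w : EuclideanSpace ℝ (Fin n) → ℝ)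
    (x₀ : EuclideanSpace ℝ (Fin n)) (R : ℝ) : ℝ :=
  (((volume (Metric.ball x₀ R)).toReal)⁻¹ * ∫ x in Metric.ball x₀ R, w x) *
  (((volume (Metric.ball x₀ R)).toReal)⁻¹ * ∫ x in Metric.ball x₀ R, (w x)⁻¹)

/-!
Write `w_σ(x) = g ‖x‖` with `g r = r (1 + |log r|) ^ σ`. Since `1 + |a| ≤ (1 + |b|)(1 + |a - b|)`
and `(1 + log t) ^ σ ≲ t ^ ε`, the logarithmic factor changes by at most `(s / r) ^ ε` between
radii `r ≤ s`. Hence `g` is almost increasing and `g s ≲ (s / r) ^ p g r` with `p = 3 / 2 < n`.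
Every radial weight with these two properties is A₂: on a ball with `‖x₀‖ ≥ 2R` the weight is
comparable to a constant, while a ball with `‖x₀‖ < 2R` lies in `B(0, 3R)`, where
`w ≲ g(3R)` and `w⁻¹ ≲ g(3R)⁻¹ (3R / ‖x‖) ^ p`, and `‖x‖ ^ (-p)` is integrable near `0` with
`∫_{B(0,ρ)} ‖x‖ ^ (-p) = ρ ^ (n - p) ∫_{B(0,1)} ‖x‖ ^ (-p)`.
-/

open Real Metric Module

lemma one_add_abs_le_mul_one_add_abs_sub (x y : ℝ) : 1 + |x| ≤ (1 + |y|) * (1 + |x - y|) := by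
  have := abs_sub_abs_le_abs_sub x y
  nlinarith [abs_nonneg y, abs_nonneg (x - y)]

lemma one_add_log_rpow_le {σ ε t : ℝ} (hσ : 0 < σ) (hε : 0 < ε) (ht : 1 ≤ t) :
    (1 + log t) ^ σ ≤ (1 + σ / ε) ^ σ * t ^ ε := by
  have hδ : 0 < ε / σ := div_pos hε hσ
  have hlog : log t ≤ σ / ε * t ^ (ε / σ) :=
    calc log t ≤ t ^ (ε / σ) / (ε / σ) := log_le_rpow_div (by linarith) hδ
      _ = σ / ε * t ^ (ε / σ) := by field_simp
  have hone : 1 ≤ t ^ (ε / σ) := one_le_rpow ht hδ.le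
  calc (1 + log t) ^ σ ≤ ((1 + σ / ε) * t ^ (ε / σ)) ^ σ := by
        refine rpow_le_rpow (by linarith [log_nonneg ht]) ?_ hσ.le
        rw [add_mul, one_mul]
        linarith
    _ = (1 + σ / ε) ^ σ * t ^ ε := by
        rw [mul_rpow (by positivity) (by positivity), ← rpow_mul (by linarith),
          div_mul_cancel₀ _ hσ.ne']

lemma one_add_abs_log_rpow_le_mul {σ a b : ℝ} (hσ : 0 ≤ σ) (ha : 0 < a) (hb : 0 < b) :
    (1 + |log a|) ^ σ ≤ (1 + |log (a / b)|) ^ σ * (1 + |log b|) ^ σ := by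
  rw [← mul_rpow (by positivity) (by positivity), log_div ha.ne' hb.ne', mul_comm]
  exact rpow_le_rpow (by positivity) (one_add_abs_le_mul_one_add_abs_sub _ _) hσ

lemma one_add_abs_log_rpow_le_of_le {σ ε r s : ℝ} (hσ : 0 < σ) (hε : 0 < ε) (hr : 0 < r)
    (hrs : r ≤ s) :
    (1 + |log r|) ^ σ ≤ (1 + σ / ε) ^ σ * (s / r) ^ ε * (1 + |log s|) ^ σ ∧
    (1 + |log s|) ^ σ ≤ (1 + σ / ε) ^ σ * (s / r) ^ ε * (1 + |log r|) ^ σ := by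
  have hs : 0 < s := hr.trans_le hrs
  have hratio : 1 ≤ s / r := (one_le_div hr).mpr hrs
  have hkey : (1 + |log (s / r)|) ^ σ ≤ (1 + σ / ε) ^ σ * (s / r) ^ ε := by
    rw [abs_of_nonneg (log_nonneg hratio)]
    exact one_add_log_rpow_le hσ hε hratio
  have hinv : |log (r / s)| = |log (s / r)| := by rw [← inv_div, log_inv, abs_neg]
  constructor
  · calc (1 + |log r|) ^ σ ≤ (1 + |log (r / s)|) ^ σ * (1 + |log s|) ^ σ :=
          one_add_abs_log_rpow_le_mul hσ.le hr hs
      _ ≤ _ := by rw [hinv]; gcongr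
  · calc (1 + |log s|) ^ σ ≤ (1 + |log (s / r)|) ^ σ * (1 + |log r|) ^ σ :=
          one_add_abs_log_rpow_le_mul hσ.le hs hr
      _ ≤ _ := by gcongr

lemma mul_one_add_abs_log_rpow_le_of_le {σ r s : ℝ} (hσ : 0 < σ) (hr : 0 < r) (hrs : r ≤ s) :
    r * (1 + |log r|) ^ σ ≤ (1 + σ) ^ σ * (s * (1 + |log s|) ^ σ) := by
  have h := (one_add_abs_log_rpow_le_of_le hσ one_pos hr hrs).1
  rw [div_one, rpow_one] at h
  calc r * (1 + |log r|) ^ σ ≤ r * ((1 + σ) ^ σ * (s / r) * (1 + |log s|) ^ σ) := by gcongr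
    _ = (1 + σ) ^ σ * (s * (1 + |log s|) ^ σ) := by field_simp

lemma mul_one_add_abs_log_rpow_le_rpow_mul {σ ε r s : ℝ} (hσ : 0 < σ) (hε : 0 < ε) (hr : 0 < r)
    (hrs : r ≤ s) :
    s * (1 + |log s|) ^ σ ≤ (1 + σ / ε) ^ σ * (s / r) ^ (1 + ε) * (r * (1 + |log r|) ^ σ) := by
  have h := (one_add_abs_log_rpow_le_of_le hσ hε hr hrs).2
  have hs : 0 < s := hr.trans_le hrs
  have hratio : 0 < s / r := div_pos hs hr
  calc s * (1 + |log s|) ^ σ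
      ≤ s * ((1 + σ / ε) ^ σ * (s / r) ^ ε * (1 + |log r|) ^ σ) := by gcongr
    _ = (1 + σ / ε) ^ σ * (s / r * (s / r) ^ ε) * (r * (1 + |log r|) ^ σ) := by field_simp
    _ = (1 + σ / ε) ^ σ * (s / r) ^ (1 + ε) * (r * (1 + |log r|) ^ σ) := by
        rw [rpow_add hratio, rpow_one]

lemma measureReal_ball_pos {X : Type*} [PseudoMetricSpace X] [ProperSpace X] [MeasurableSpace X]
    (μ : Measure X) [μ.IsOpenPosMeasure] [IsFiniteMeasureOnCompacts μ] (x : X) {r : ℝ}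
    (hr : 0 < r) : 0 < μ.real (ball x r) :=
  ENNReal.toReal_pos (measure_ball_pos μ x hr).ne' measure_ball_lt_top.ne

lemma A2quantity_le_mul {n : ℕ} {w q : EuclideanSpace ℝ (Fin n) → ℝ}
    {x₀ : EuclideanSpace ℝ (Fin n)} {R M : ℝ} (hR : 0 < R) (hw : ∀ x ∈ ball x₀ R, 0 ≤ w x)
    (hwM : ∀ x ∈ ball x₀ R, w x ≤ M) (hq : IntegrableOn q (ball x₀ R))
    (hwq : ∀ x ∈ ball x₀ R, (w x)⁻¹ ≤ q x) :
    A2quantity w x₀ R ≤ M * ((volume.real (ball x₀ R))⁻¹ * ∫ x in ball x₀ R, q x) := by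
  have hB : 0 < volume.real (ball x₀ R) := measureReal_ball_pos volume x₀ hR
  have hM : 0 ≤ M := (hw x₀ (mem_ball_self hR)).trans (hwM x₀ (mem_ball_self hR))
  have hint_w : ∫ x in ball x₀ R, w x ≤ volume.real (ball x₀ R) * M := by
    rw [← smul_eq_mul, ← setIntegral_const]
    exact integral_mono_of_nonneg (ae_restrict_of_forall_mem measurableSet_ball hw)
      (integrableOn_const measure_ball_lt_top.ne) (ae_restrict_of_forall_mem measurableSet_ball hwM)
  have hint_inv : ∫ x in ball x₀ R, (w x)⁻¹ ≤ ∫ x in ball x₀ R, q x :=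
    integral_mono_of_nonneg
      (ae_restrict_of_forall_mem measurableSet_ball fun x hx => inv_nonneg.mpr (hw x hx)) hq
      (ae_restrict_of_forall_mem measurableSet_ball hwq)
  have hinv_nonneg : 0 ≤ ∫ x in ball x₀ R, (w x)⁻¹ :=
    setIntegral_nonneg measurableSet_ball fun x hx => inv_nonneg.mpr (hw x hx)
  rw [A2quantity, ← measureReal_def]
  gcongr
  rwa [inv_mul_le_iff₀ hB]

lemma addHaar_real_ball_of_pos {E : Type*} [NormedAddCommGroup E] [NormedSpace ℝ E]
    [FiniteDimensional ℝ E] [MeasurableSpace E] [BorelSpace E] (μ : Measure E)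
    [μ.IsAddHaarMeasure] (x : E) {r : ℝ} (hr : 0 < r) :
    μ.real (ball x r) = r ^ finrank ℝ E * μ.real (ball 0 1) := by
  rw [measureReal_def, Measure.addHaar_ball_of_pos _ _ hr, ENNReal.toReal_mul,
    ENNReal.toReal_ofReal (by positivity), ← measureReal_def]

lemma setIntegral_ball_norm_rpow {E : Type*} [NormedAddCommGroup E] [NormedSpace ℝ E]
    [FiniteDimensional ℝ E] [MeasurableSpace E] [BorelSpace E] (μ : Measure E)
    [μ.IsAddHaarMeasure] (p : ℝ) {ρ : ℝ} (hρ : 0 < ρ) :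
    ∫ x in ball (0 : E) ρ, ‖x‖ ^ p ∂μ =
      ρ ^ (finrank ℝ E + p) * ∫ x in ball (0 : E) 1, ‖x‖ ^ p ∂μ := by
  have h := Measure.setIntegral_comp_smul_of_pos μ (fun x : E => ‖x‖ ^ p) (ball 0 1) hρ
  rw [smul_unitBall_of_pos hρ, smul_eq_mul] at h
  have hscale : ∫ x in ball (0 : E) 1, ‖ρ • x‖ ^ p ∂μ =
      ρ ^ p * ∫ x in ball (0 : E) 1, ‖x‖ ^ p ∂μ := by
    rw [← integral_const_mul]
    refine setIntegral_congr_fun measurableSet_ball fun x _ => ?_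
    rw [norm_smul, norm_of_nonneg hρ.le, mul_rpow hρ.le (norm_nonneg x)]
  rw [hscale, eq_inv_mul_iff_mul_eq₀ (by positivity)] at h
  rw [← h, rpow_add hρ, rpow_natCast, mul_assoc]

lemma integrableOn_ball_norm_rpow_neg {E : Type*} [NormedAddCommGroup E] [NormedSpace ℝ E]
    [FiniteDimensional ℝ E] [MeasurableSpace E] [BorelSpace E] (μ : Measure E)
    [μ.IsAddHaarMeasure] {p : ℝ} (hp : p < finrank ℝ E) (hp0 : 0 ≤ p) (ρ : ℝ) :
    IntegrableOn (fun x : E => ‖x‖ ^ (-p)) (ball 0 ρ) μ := by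
  refine integrableOn_ball_of_norm_le_rpow (C := 1) ?_ hp (.of_forall fun x => ?_) ?_
  · exact_mod_cast (hp0.trans_lt hp)
  · rw [one_mul, norm_of_nonneg (by positivity)]
  · exact (measurable_norm.pow_const _).aestronglyMeasurable

section RadialWeight

variable {n : ℕ} {g : ℝ → ℝ} {C₁ C₂ p : ℝ} {x₀ : EuclideanSpace ℝ (Fin n)} {R : ℝ}

lemma one_le_of_quasiMono (hpos : ∀ r, 0 < r → 0 < g r)
    (hmono : ∀ r s, 0 < r → r ≤ s → g r ≤ C₁ * g s) : 1 ≤ C₁ :=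
  (le_mul_iff_one_le_left (hpos 1 one_pos)).mp (hmono 1 1 one_pos le_rfl)

lemma one_le_of_growth (hpos : ∀ r, 0 < r → 0 < g r)
    (hgrowth : ∀ r s, 0 < r → r ≤ s → g s ≤ C₂ * (s / r) ^ p * g r) : 1 ≤ C₂ := by
  have h := hgrowth 1 1 one_pos le_rfl
  rw [div_one, one_rpow, mul_one] at h
  exact (le_mul_iff_one_le_left (hpos 1 one_pos)).mp h

lemma apply_norm_nonneg (hg0 : g 0 = 0) (hpos : ∀ r, 0 < r → 0 < g r)
    (x : EuclideanSpace ℝ (Fin n)) : 0 ≤ g ‖x‖ := by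
  rcases (norm_nonneg x).eq_or_lt with hx0 | hx0
  · rw [← hx0, hg0]
  · exact (hpos _ hx0).le

lemma apply_norm_le_mul_of_norm_le (hg0 : g 0 = 0) (hpos : ∀ r, 0 < r → 0 < g r)
    (hmono : ∀ r s, 0 < r → r ≤ s → g r ≤ C₁ * g s) {x : EuclideanSpace ℝ (Fin n)} {s : ℝ}
    (hs : 0 < s) (hx : ‖x‖ ≤ s) : g ‖x‖ ≤ C₁ * g s := by
  rcases (norm_nonneg x).eq_or_lt with hx0 | hx0
  · have hC₁ := one_le_of_quasiMono hpos hmono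
    have hgs := hpos s hs
    rw [← hx0, hg0]
    positivity
  · exact hmono _ _ hx0 hx

lemma inv_apply_norm_le_mul_rpow_neg (hg0 : g 0 = 0) (hpos : ∀ r, 0 < r → 0 < g r)
    (hgrowth : ∀ r s, 0 < r → r ≤ s → g s ≤ C₂ * (s / r) ^ p * g r)
    {x : EuclideanSpace ℝ (Fin n)} {s : ℝ} (hs : 0 < s) (hx : ‖x‖ ≤ s) :
    (g ‖x‖)⁻¹ ≤ C₂ * s ^ p / g s * ‖x‖ ^ (-p) := by
  have hgs := hpos s hs
  rcases (norm_nonneg x).eq_or_lt with hx0 | hx0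
  · have hC₂ := one_le_of_growth hpos hgrowth
    rw [← hx0, hg0, inv_zero]
    positivity
  · have hrw : C₂ * s ^ p / g s * ‖x‖ ^ (-p) = C₂ * (s / ‖x‖) ^ p / g s := by
      rw [div_rpow hs.le hx0.le, rpow_neg hx0.le]
      field_simp
    rw [hrw, inv_eq_one_div, div_le_iff₀ (hpos _ hx0), div_mul_eq_mul_div, one_le_div hgs]
    exact hgrowth _ _ hx0 hx

lemma A2quantity_radial_le_of_far (hg0 : g 0 = 0) (hpos : ∀ r, 0 < r → 0 < g r)
    (hmono : ∀ r s, 0 < r → r ≤ s → g r ≤ C₁ * g s)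
    (hgrowth : ∀ r s, 0 < r → r ≤ s → g s ≤ C₂ * (s / r) ^ p * g r) (hp : 0 ≤ p)
    (hR : 0 < R) (hfar : 2 * R ≤ ‖x₀‖) :
    A2quantity (fun x => g ‖x‖) x₀ R ≤ C₁ * C₁ * C₂ * 3 ^ p := by
  set d := ‖x₀‖ - R
  set D := ‖x₀‖ + R
  have hd : 0 < d := by linarith
  have hgd := hpos d hd
  have hnorm : ∀ x ∈ ball x₀ R, d ≤ ‖x‖ ∧ ‖x‖ ≤ D := fun x hx => by
    have := mem_ball_iff_norm.mp hx
    constructor <;> linarith [norm_sub_norm_le x₀ x, norm_sub_norm_le x x₀, norm_sub_rev x x₀]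
  have hinv : ∀ x ∈ ball x₀ R, (g ‖x‖)⁻¹ ≤ C₁ / g d := fun x hx => by
    have hx := (hnorm x hx).1
    rw [inv_eq_one_div, div_le_div_iff₀ (hpos _ (hd.trans_le hx)) hgd, one_mul]
    exact hmono d _ hd hx
  have hgD : g D ≤ C₂ * 3 ^ p * g d := by
    have hC₂ := one_le_of_growth hpos hgrowth
    have hratio : D / d ≤ 3 := by rw [div_le_iff₀ hd]; linarith
    calc g D ≤ C₂ * (D / d) ^ p * g d := hgrowth d D hd (by linarith)
      _ ≤ C₂ * 3 ^ p * g d := by gcongr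
  calc A2quantity (fun x => g ‖x‖) x₀ R
      ≤ C₁ * g D * ((volume.real (ball x₀ R))⁻¹ * ∫ x in ball x₀ R, C₁ / g d) :=
        A2quantity_le_mul hR (fun x _ => apply_norm_nonneg hg0 hpos x)
          (fun x hx => apply_norm_le_mul_of_norm_le hg0 hpos hmono (by linarith) (hnorm x hx).2)
          (integrableOn_const measure_ball_lt_top.ne) hinv
    _ = C₁ * C₁ * (g D / g d) := by
        rw [setIntegral_const, smul_eq_mul,
          inv_mul_cancel_left₀ (measureReal_ball_pos volume x₀ hR).ne']
        ring
    _ ≤ C₁ * C₁ * C₂ * 3 ^ p := by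
        rw [mul_assoc (C₁ * C₁)]
        exact mul_le_mul_of_nonneg_left ((div_le_iff₀ hgd).mpr hgD) (mul_self_nonneg C₁)

lemma A2quantity_radial_le_of_near (hp : p < n) (hp0 : 0 ≤ p) (hg0 : g 0 = 0)
    (hpos : ∀ r, 0 < r → 0 < g r) (hmono : ∀ r s, 0 < r → r ≤ s → g r ≤ C₁ * g s)
    (hgrowth : ∀ r s, 0 < r → r ≤ s → g s ≤ C₂ * (s / r) ^ p * g r)
    (hR : 0 < R) (hnear : ‖x₀‖ < 2 * R) :
    A2quantity (fun x => g ‖x‖) x₀ R ≤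
      C₁ * C₂ * 3 ^ n * (∫ x in ball (0 : EuclideanSpace ℝ (Fin n)) 1, ‖x‖ ^ (-p)) /
        volume.real (ball (0 : EuclideanSpace ℝ (Fin n)) 1) := by
  set s := 3 * R
  have hs : 0 < s := by positivity
  have hgs := hpos s hs
  have hsub : ball x₀ R ⊆ ball 0 s := fun x hx => by
    rw [mem_ball_zero_iff]
    linarith [mem_ball_iff_norm.mp hx, norm_sub_norm_le x x₀]
  have hnorm : ∀ x ∈ ball x₀ R, ‖x‖ ≤ s := fun x hx => (mem_ball_zero_iff.mp (hsub hx)).le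
  have hC₁ := one_le_of_quasiMono hpos hmono
  have hC₂ := one_le_of_growth hpos hgrowth
  set K := C₂ * s ^ p / g s
  have hqint : IntegrableOn (fun x => K * ‖x‖ ^ (-p)) (ball (0 : EuclideanSpace ℝ (Fin n)) s) :=
    (integrableOn_ball_norm_rpow_neg volume (by rwa [finrank_euclideanSpace_fin]) hp0 s).const_mul K
  calc A2quantity (fun x => g ‖x‖) x₀ R
      ≤ C₁ * g s * ((volume.real (ball x₀ R))⁻¹ * ∫ x in ball x₀ R, K * ‖x‖ ^ (-p)) :=
        A2quantity_le_mul hR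
          (fun x _ => apply_norm_nonneg hg0 hpos x)
          (fun x hx => apply_norm_le_mul_of_norm_le hg0 hpos hmono hs (hnorm x hx))
          (hqint.mono_set hsub)
          (fun x hx => inv_apply_norm_le_mul_rpow_neg hg0 hpos hgrowth hs (hnorm x hx))
    _ ≤ C₁ * g s * ((volume.real (ball x₀ R))⁻¹ *
          ∫ x in ball (0 : EuclideanSpace ℝ (Fin n)) s, K * ‖x‖ ^ (-p)) := by
        gcongr
        exact .of_forall fun x => by positivity
    _ = _ := by
        have hpow : s ^ p * s ^ ((n : ℝ) - p) = 3 ^ n * R ^ n := by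
          rw [← rpow_add hs, add_sub_cancel, rpow_natCast, mul_pow]
        have hb := measureReal_ball_pos volume (0 : EuclideanSpace ℝ (Fin n)) one_pos
        rw [integral_const_mul, setIntegral_ball_norm_rpow volume _ hs,
          addHaar_real_ball_of_pos volume x₀ hR, finrank_euclideanSpace_fin]
        simp only [K]
        field_simp
        linear_combination (∫ x in ball (0 : EuclideanSpace ℝ (Fin n)) 1, ‖x‖ ^ (-p)) * hpow

end RadialWeight

theorem A2quantity_radial_le {n : ℕ} {g : ℝ → ℝ} {C₁ C₂ p : ℝ} (hp : p < n) (hp0 : 0 ≤ p)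
    (hg0 : g 0 = 0) (hpos : ∀ r, 0 < r → 0 < g r) (hmono : ∀ r s, 0 < r → r ≤ s → g r ≤ C₁ * g s)
    (hgrowth : ∀ r s, 0 < r → r ≤ s → g s ≤ C₂ * (s / r) ^ p * g r) :
    ∃ A : ℝ, ∀ (x₀ : EuclideanSpace ℝ (Fin n)) (R : ℝ), 0 < R →
      A2quantity (fun x => g ‖x‖) x₀ R ≤ A := by
  refine ⟨max (C₁ * C₁ * C₂ * 3 ^ p)
    (C₁ * C₂ * 3 ^ n * (∫ x in ball (0 : EuclideanSpace ℝ (Fin n)) 1, ‖x‖ ^ (-p)) /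
      volume.real (ball (0 : EuclideanSpace ℝ (Fin n)) 1)), fun x₀ R hR => ?_⟩
  rcases le_or_gt (2 * R) ‖x₀‖ with hfar | hnear
  · exact (A2quantity_radial_le_of_far hg0 hpos hmono hgrowth hp0 hR hfar).trans (le_max_left _ _)
  · exact (A2quantity_radial_le_of_near hp hp0 hg0 hpos hmono hgrowth hR hnear).trans
      (le_max_right _ _)

/-- The weight `w_σ(x) = |x|(1+|log|x||)^σ` is a Muckenhoupt A₂ weight on `ℝⁿ`. -/
theorem wsigma_is_A2 (n : ℕ) (hn : 2 ≤ n) (σ : ℝ) (hσ : 1 < σ) :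
    ∃ A : ℝ, ∀ (x₀ : EuclideanSpace ℝ (Fin n)) (R : ℝ), 0 < R →
      A2quantity (fun x => ‖x‖ * (1 + |Real.log ‖x‖|) ^ σ) x₀ R ≤ A := by
  have hσ0 : 0 < σ := by linarith
  have hp : (1 + 1 / 2 : ℝ) < n := by
    have : (2 : ℝ) ≤ n := by exact_mod_cast hn
    linarith
  exact A2quantity_radial_le (g := fun r => r * (1 + |log r|) ^ σ) hp (by norm_num) (by simp)
    (fun r hr => by positivity)
    (fun r s hr hrs => mul_one_add_abs_log_rpow_le_of_le hσ0 hr hrs)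
    (fun r s hr hrs => mul_one_add_abs_log_rpow_le_rpow_mul hσ0 one_half_pos hr hrs)
end
end

section
/- Hölder-type bound for weighted functions: let λ > 0, 0 < μ ≤ 1, and let a : ℝⁿ → ℂ be such that g(x) := ⟨x⟩^{λ} a(x) satisfies ‖g‖_{L^∞} < ∞ and |g(x) - g(y)| ≤ K|x-y|^{μ} for all x,y. Then there exists C such that |a(x) - a(y)| ≤ C · min{1, |x-y|}^{μ} (⟨x⟩^{-λ} + ⟨y⟩^{-λ}) for all x, y ∈ ℝⁿ. -/
noncomputable section

/-- The Japanese bracket `⟨x⟩ = (1+|x|²)^{1/2}`. -/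
def jap {n : ℕ} (x : EuclideanSpace ℝ (Fin n)) : ℝ := Real.sqrt (1 + ‖x‖ ^ 2)

lemma one_le_jap {n : ℕ} (x : EuclideanSpace ℝ (Fin n)) : 1 ≤ jap x := by
  rw [jap]
  nlinarith [Real.sq_sqrt (show (0:ℝ) ≤ 1 + ‖x‖^2 by positivity),
    Real.sqrt_nonneg (1 + ‖x‖^2), sq_nonneg ‖x‖]

lemma jap_lip {n : ℕ} (x y : EuclideanSpace ℝ (Fin n)) : |jap x - jap y| ≤ ‖x - y‖ := by
  have ha : (0:ℝ) ≤ ‖x‖ := norm_nonneg _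
  have hb : (0:ℝ) ≤ ‖y‖ := norm_nonneg _
  have h2 : |‖x‖ - ‖y‖| ≤ ‖x - y‖ := abs_norm_sub_norm_le x y
  have hsb : ‖y‖ ≤ Real.sqrt (1 + ‖y‖ ^ 2) := by
    nlinarith [Real.sq_sqrt (show (0:ℝ) ≤ 1 + ‖y‖^2 by positivity),
      Real.sqrt_nonneg (1 + ‖y‖^2)]
  have hsa : ‖x‖ ≤ Real.sqrt (1 + ‖x‖ ^ 2) := by
    nlinarith [Real.sq_sqrt (show (0:ℝ) ≤ 1 + ‖x‖^2 by positivity),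
      Real.sqrt_nonneg (1 + ‖x‖^2)]
  have key : ∀ a b : ℝ, 0 ≤ a → 0 ≤ b → b ≤ a → b ≤ Real.sqrt (1 + b^2) →
      Real.sqrt (1 + a ^ 2) - Real.sqrt (1 + b ^ 2) ≤ a - b := by
    intro a b ha' hb' h hsb'
    have : Real.sqrt (1 + a ^ 2) ≤ Real.sqrt (1 + b ^ 2) + (a - b) := by
      rw [show Real.sqrt (1+a^2) ≤ Real.sqrt (1+b^2) + (a-b) ↔ _ from Real.sqrt_le_iff]
      constructor
      · linarith [Real.sqrt_nonneg (1 + b^2)]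
      · nlinarith [Real.sq_sqrt (show (0:ℝ) ≤ 1 + b^2 by positivity), hsb',
          Real.sqrt_nonneg (1 + b^2)]
    linarith
  rw [jap, jap, abs_le]
  rcases le_total ‖y‖ ‖x‖ with h | h
  · have := key ‖x‖ ‖y‖ ha hb h hsb
    have hmono : Real.sqrt (1 + ‖y‖ ^ 2) ≤ Real.sqrt (1 + ‖x‖ ^ 2) :=
      Real.sqrt_le_sqrt (by nlinarith)
    rw [abs_le] at h2
    constructor <;> linarith
  · have := key ‖y‖ ‖x‖ hb ha h hsa
    have hmono : Real.sqrt (1 + ‖x‖ ^ 2) ≤ Real.sqrt (1 + ‖y‖ ^ 2) :=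
      Real.sqrt_le_sqrt (by nlinarith)
    rw [abs_le] at h2
    constructor <;> linarith

lemma one_sub_rpow_le {u lam : ℝ} (hu0 : 0 < u) (hu1 : u ≤ 1) (hlam : 0 < lam) :
    1 - u ^ lam ≤ max 1 lam * (1 - u) := by
  rcases le_total lam 1 with h | h
  · have h1 : u ^ (1:ℝ) ≤ u ^ lam := Real.rpow_le_rpow_of_exponent_ge hu0 hu1 h
    rw [Real.rpow_one] at h1
    nlinarith [le_max_left (1:ℝ) lam, sub_nonneg.2 hu1]
  · have hb := one_add_mul_self_le_rpow_one_add (show (-1:ℝ) ≤ u - 1 by linarith) h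
    rw [show (1:ℝ) + (u - 1) = u by ring] at hb
    nlinarith [le_max_right (1:ℝ) lam, sub_nonneg.2 hu1]

lemma inv_rpow_diff {lam s t d : ℝ} (hlam : 0 < lam) (hs : 1 ≤ s) (ht : 1 ≤ t)
    (hd : |s - t| ≤ d) :
    |s ^ (-lam) - t ^ (-lam)| ≤ max 1 lam * d * (s ^ (-lam) + t ^ (-lam)) := by
  wlog h : s ≤ t generalizing s t
  · rw [abs_sub_comm] at hd ⊢
    have := this ht hs hd (le_of_not_ge h)
    linarith
  have hs0 : 0 < s := lt_of_lt_of_le one_pos hs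
  have ht0 : 0 < t := lt_of_lt_of_le one_pos ht
  have hspow : 0 < s ^ lam := Real.rpow_pos_of_pos hs0 lam
  have htpow : 0 < t ^ lam := Real.rpow_pos_of_pos ht0 lam
  have hmono : t ^ (-lam) ≤ s ^ (-lam) := by
    rw [Real.rpow_neg hs0.le, Real.rpow_neg ht0.le]
    exact inv_anti₀ hspow (Real.rpow_le_rpow hs0.le h hlam.le)
  have hts : t - s ≤ d := by
    rw [abs_sub_comm, abs_of_nonneg (by linarith)] at hd; exact hd
  have key : s ^ (-lam) - t ^ (-lam) = s ^ (-lam) * (1 - (s/t) ^ lam) := by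
    rw [Real.div_rpow hs0.le ht0.le, Real.rpow_neg hs0.le, Real.rpow_neg ht0.le]
    field_simp
  have hu0 : 0 < s / t := div_pos hs0 ht0
  have hu1 : s / t ≤ 1 := (div_le_one ht0).2 h
  have h1 := one_sub_rpow_le hu0 hu1 hlam
  have h2 : 1 - s / t ≤ t - s := by
    rw [show 1 - s/t = (t - s)/t by field_simp]
    rw [div_le_iff₀ ht0]
    nlinarith
  have hmax : (1:ℝ) ≤ max 1 lam := le_max_left _ _
  have hsn : 0 < s ^ (-lam) := Real.rpow_pos_of_pos hs0 _
  have htn : 0 < t ^ (-lam) := Real.rpow_pos_of_pos ht0 _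
  rw [abs_of_nonneg (by linarith)]
  rw [key]
  have : 1 - (s/t) ^ lam ≤ max 1 lam * d := by
    calc 1 - (s/t)^lam ≤ max 1 lam * (1 - s/t) := h1
    _ ≤ max 1 lam * d := by nlinarith
  nlinarith [Real.rpow_le_one hu0.le hu1 hlam.le]

/-- Hölder-type bound for weighted functions: if `g(x) = ⟨x⟩^λ a(x)` is bounded and
`μ`-Hölder continuous, then `|a(x)-a(y)| ≤ C min{1,|x-y|}^μ (⟨x⟩^{-λ} + ⟨y⟩^{-λ})`. -/
theorem holder_bound_for_weighted (n : ℕ) (lam μ K M : ℝ)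
    (hlam : 0 < lam) (hμ : 0 < μ) (hμ1 : μ ≤ 1)
    (a : EuclideanSpace ℝ (Fin n) → ℂ)
    (hM : ∀ x, ‖(↑(jap x ^ lam) : ℂ) * a x‖ ≤ M)
    (hK : ∀ x y, ‖(↑(jap x ^ lam) : ℂ) * a x - (↑(jap y ^ lam) : ℂ) * a y‖
      ≤ K * ‖x - y‖ ^ μ) :
    ∃ C : ℝ, ∀ x y, ‖a x - a y‖ ≤
      C * min 1 ‖x - y‖ ^ μ * (jap x ^ (-lam) + jap y ^ (-lam)) := by
  have hM0 : 0 ≤ M := le_trans (norm_nonneg _) (hM 0)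
  set C := max K 0 + M * max 1 lam + M with hC
  refine ⟨C, fun x y => ?_⟩
  have hjx : (0:ℝ) < jap x := lt_of_lt_of_le one_pos (one_le_jap x)
  have hjy : (0:ℝ) < jap y := lt_of_lt_of_le one_pos (one_le_jap y)
  have hjxp : (0:ℝ) < jap x ^ lam := Real.rpow_pos_of_pos hjx lam
  have hjyp : (0:ℝ) < jap y ^ lam := Real.rpow_pos_of_pos hjy lam
  have hA : jap x ^ (-lam) = (jap x ^ lam)⁻¹ := by
    rw [Real.rpow_neg hjx.le]
  have hB : jap y ^ (-lam) = (jap y ^ lam)⁻¹ := by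
    rw [Real.rpow_neg hjy.le]
  have hAn : 0 < jap x ^ (-lam) := Real.rpow_pos_of_pos hjx _
  have hBn : 0 < jap y ^ (-lam) := Real.rpow_pos_of_pos hjy _
  -- norms of a
  have hax : ‖a x‖ ≤ M * jap x ^ (-lam) := by
    have h := hM x
    rw [norm_mul, Complex.norm_real, Real.norm_eq_abs, abs_of_pos hjxp] at h
    rw [hA, ← div_eq_mul_inv]
    exact (le_div_iff₀' hjxp).2 h
  have hay : ‖a y‖ ≤ M * jap y ^ (-lam) := by
    have h := hM y
    rw [norm_mul, Complex.norm_real, Real.norm_eq_abs, abs_of_pos hjyp] at h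
    rw [hB, ← div_eq_mul_inv]
    exact (le_div_iff₀' hjyp).2 h
  have hKmax : K ≤ max K 0 := le_max_left _ _
  have hmax1 : (1:ℝ) ≤ max 1 lam := le_max_left _ _
  rcases le_or_gt 1 ‖x - y‖ with hr | hr
  · -- far case
    rw [min_eq_left hr, Real.one_rpow]
    have h1 : ‖a x - a y‖ ≤ M * jap x ^ (-lam) + M * jap y ^ (-lam) :=
      (norm_sub_le _ _).trans (add_le_add hax hay)
    have hC' : M ≤ C := by
      have h1' : 0 ≤ M * max 1 lam := by positivity
      have h2' : 0 ≤ max K 0 := le_max_right K 0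
      simp only [hC]; linarith
    nlinarith
  · -- near case
    rw [min_eq_right hr.le]
    set r := ‖x - y‖ with hrdef
    have hr0 : 0 ≤ r := norm_nonneg _
    rcases eq_or_lt_of_le hr0 with h0 | h0
    · have hxy : x = y := by
        have : ‖x - y‖ = 0 := h0.symm
        rwa [norm_sub_eq_zero_iff] at this
      subst hxy
      have : (0:ℝ) ≤ C := by
        simp only [hC]; positivity
      simp only [sub_self, norm_zero]
      positivity
    · -- key decomposition
      have hkey : a x - a y = (↑(jap x ^ (-lam)) : ℂ) * ((↑(jap x ^ lam):ℂ) * a x - (↑(jap y ^ lam):ℂ) * a y)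
          + (↑(jap x ^ (-lam)) - ↑(jap y ^ (-lam)) : ℂ) * ((↑(jap y ^ lam):ℂ) * a y) := by
        rw [hA, hB]
        push_cast
        have hx' : ((jap x ^ lam : ℝ) : ℂ) ≠ 0 := by
          exact_mod_cast ne_of_gt hjxp
        have hy' : ((jap y ^ lam : ℝ) : ℂ) ≠ 0 := by
          exact_mod_cast ne_of_gt hjyp
        field_simp
        ring
      have hnorm : ‖a x - a y‖ ≤ jap x ^ (-lam) * (K * r ^ μ)
          + |jap x ^ (-lam) - jap y ^ (-lam)| * M := by
        rw [hkey]
        refine (norm_add_le _ _).trans (add_le_add ?_ ?_)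
        · rw [norm_mul, Complex.norm_real, Real.norm_eq_abs, abs_of_pos hAn]
          exact mul_le_mul_of_nonneg_left (hK x y) hAn.le
        · rw [norm_mul]
          have : ‖(↑(jap x ^ (-lam)) - ↑(jap y ^ (-lam)) : ℂ)‖ = |jap x ^ (-lam) - jap y ^ (-lam)| := by
            rw [← Complex.ofReal_sub, Complex.norm_real, Real.norm_eq_abs]
          rw [this]
          exact mul_le_mul_of_nonneg_left (hM y) (abs_nonneg _)
      have hdiff : |jap x ^ (-lam) - jap y ^ (-lam)| ≤
          max 1 lam * r * (jap x ^ (-lam) + jap y ^ (-lam)) :=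
        inv_rpow_diff hlam (one_le_jap x) (one_le_jap y) (jap_lip x y)
      have hrmu : r ≤ r ^ μ := by
        have := Real.rpow_le_rpow_of_exponent_ge h0 hr.le hμ1
        rwa [Real.rpow_one] at this
      have hrmu0 : 0 < r ^ μ := Real.rpow_pos_of_pos h0 μ
      have hrmu1 : r ^ μ ≤ 1 := Real.rpow_le_one hr0 hr.le hμ.le
      calc ‖a x - a y‖ ≤ jap x ^ (-lam) * (K * r ^ μ)
          + |jap x ^ (-lam) - jap y ^ (-lam)| * M := hnorm
        _ ≤ max K 0 * r ^ μ * (jap x ^ (-lam) + jap y ^ (-lam))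
            + M * max 1 lam * r ^ μ * (jap x ^ (-lam) + jap y ^ (-lam)) := by
          refine add_le_add ?_ ?_
          · nlinarith [mul_nonneg (mul_nonneg (sub_nonneg.2 hKmax) hAn.le) hrmu0.le,
              mul_nonneg (mul_nonneg (le_max_right K 0) hBn.le) hrmu0.le]
          · have hd2 : |jap x ^ (-lam) - jap y ^ (-lam)| ≤
                max 1 lam * r ^ μ * (jap x ^ (-lam) + jap y ^ (-lam)) := by
              refine hdiff.trans ?_
              have : max 1 lam * r ≤ max 1 lam * r ^ μ :=
                mul_le_mul_of_nonneg_left hrmu (by linarith)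
              nlinarith
            calc |jap x ^ (-lam) - jap y ^ (-lam)| * M
                ≤ (max 1 lam * r ^ μ * (jap x ^ (-lam) + jap y ^ (-lam))) * M :=
                  mul_le_mul_of_nonneg_right hd2 hM0
              _ = M * max 1 lam * r ^ μ * (jap x ^ (-lam) + jap y ^ (-lam)) := by ring
        _ ≤ C * r ^ μ * (jap x ^ (-lam) + jap y ^ (-lam)) := by
          simp only [hC]
          nlinarith [mul_nonneg (mul_nonneg hM0 hrmu0.le) (by positivity :
            (0:ℝ) ≤ jap x ^ (-lam) + jap y ^ (-lam))]
end
end
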